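/- Static elaboration preserves reduction semantics modulo type tags: for the elaboration judgement Γ ⊢ s ⇝ s' defined by structural recursion (identity on all basic combinators and annotating s◁π with the inferred type π' of s), the elaborated strategy s' applied to a (type-tagged) term produces a term reduct t' if and only if the original strategy s applied to t produces t' under the type-dependent reduction semantics, for all well-typed s and t in a calculus consisting of rewrite-rule-free combinators ε, δ, ¬, ;, +, congruences, □, ◇, and ◁. -/
import Mathlib


namespace Sg

/-- Term types: sorts, the empty-tuple type, and pair types. -/
inductive TmTy where
  | sort : ℕ → TmTy
  | unit : TmTy
  | pair : TmTy → TmTy → TmTy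

/-- Terms: constants, function-symbol applications, variables, tuples. -/
inductive Tm where
  | con : String → Tm
  | fn : String → List Tm → Tm
  | var : String → Tm
  | unit : Tm
  | pair : Tm → Tm → Tm

/-- A (well-formed, non-overloading) context: declared sorts, and type
assignments for constant symbols, function symbols, and variables. -/
structure Ctx where
  sorts : Set ℕ
  conTy : String → Option ℕ
  fnTy : String → Option (List ℕ × ℕ)
  varTy : String → Option TmTy

/-- Well-formedness of term types. -/
inductive WfTy (Γ : Ctx) : TmTy → Prop where
  | sort {σ} : σ ∈ Γ.sorts → WfTy Γ (.sort σ)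
  | unit : WfTy Γ .unit
  | pair {τ₁ τ₂} : WfTy Γ τ₁ → WfTy Γ τ₂ → WfTy Γ (.pair τ₁ τ₂)

/-- Well-typedness of terms. -/
inductive HasTy (Γ : Ctx) : Tm → TmTy → Prop where
  | con {c σ} : Γ.conTy c = some σ → HasTy Γ (.con c) (.sort σ)
  | fn {f ts σs σ₀} : Γ.fnTy f = some (σs, σ₀) → ts ≠ [] →
      ts.length = σs.length →
      (∀ i (h₁ : i < ts.length) (h₂ : i < σs.length),
        HasTy Γ (ts.get ⟨i, h₁⟩) (.sort (σs.get ⟨i, h₂⟩))) →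
      HasTy Γ (.fn f ts) (.sort σ₀)
  | var {x τ} : Γ.varTy x = some τ → HasTy Γ (.var x) τ
  | unit : HasTy Γ .unit .unit
  | pair {t₁ t₂ τ₁ τ₂} : HasTy Γ t₁ τ₁ → HasTy Γ t₂ τ₂ →
      HasTy Γ (.pair t₁ t₂) (.pair τ₁ τ₂)

/-- Ground terms (no variables). -/
inductive Ground : Tm → Prop where
  | con {c} : Ground (.con c)
  | fn {f ts} : (∀ t ∈ ts, Ground t) → Ground (.fn f ts)
  | unit : Ground .unit
  | pair {t₁ t₂} : Ground t₁ → Ground t₂ → Ground (.pair t₁ t₂)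

/-- Application of a substitution to a term. -/
def applySubst (θ : String → Tm) : Tm → Tm
  | .con c => .con c
  | .fn f ts => .fn f (ts.attach.map (fun ⟨t, h⟩ => applySubst θ t))
  | .var x => θ x
  | .unit => .unit
  | .pair a b => .pair (applySubst θ a) (applySubst θ b)
decreasing_by
  all_goals simp_wf
  all_goals first
    | (have := List.sizeOf_lt_of_mem h; omega)
    | omega

/-- Strategy types: many-sorted arrow types, the generic type TP,
generic type-unifying types TU(τ), and overloaded types π&π. -/
inductive Pit where
  | ms : TmTy → TmTy → Pit
  | tp : Pit
  | tu : TmTy → Pit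
  | amp : Pit → Pit → Pit

/-- Genericity relation of the calculus S'_TP (only TP is generic). -/
inductive LessTP (Γ : Ctx) : Pit → Pit → Prop where
  | tp {τ} : WfTy Γ τ → LessTP Γ (.ms τ τ) .tp

/-- Reflexive closure of `LessTP`. -/
def LessEqTP (Γ : Ctx) (π π' : Pit) : Prop := π = π' ∨ LessTP Γ π π'

/-- Genericity relation of the full calculus S'_γ (TP and TU(τ) generic). -/
inductive LessU (Γ : Ctx) : Pit → Pit → Prop where
  | tp {τ} : WfTy Γ τ → LessU Γ (.ms τ τ) .tp
  | tu {τ' τ} : WfTy Γ τ' → WfTy Γ τ → LessU Γ (.ms τ' τ) (.tu τ)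

/-- Reflexive closure of `LessU`. -/
def LessEqU (Γ : Ctx) (π π' : Pit) : Prop := π = π' ∨ LessU Γ π π'

/-- Generic strategy types. -/
def GenericP (π : Pit) : Prop := π = .tp ∨ ∃ τ, π = .tu τ

/-- Strategies. -/
inductive St where
  | rule : Tm → Tm → St
  | id : St
  | fail : St
  | seq : St → St → St
  | choice : St → St → St
  | neg : St → St
  | congC : String → St
  | congF : String → List St → St
  | all : St → St
  | one : St → St
  | reduceC : St → St → St
  | select : St → St
  | voidS : St
  | spawn : St → St → St
  | ext : St → Pit → St
  | restr : St → Pit → St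
  | ann : St → Pit → St
  | amp : St → St → St

/-- Typing of the many-sorted type-preserving calculus S'_tp. -/
inductive StTyP (Γ : Ctx) : St → TmTy → TmTy → Prop where
  | rule {tl tr τ} : HasTy Γ tl τ → HasTy Γ tr τ → StTyP Γ (.rule tl tr) τ τ
  | id {τ} : WfTy Γ τ → StTyP Γ .id τ τ
  | fail {τ} : WfTy Γ τ → StTyP Γ .fail τ τ
  | neg {s τ} : StTyP Γ s τ τ → StTyP Γ (.neg s) τ τ
  | seq {s₁ s₂ τ} : StTyP Γ s₁ τ τ → StTyP Γ s₂ τ τ → StTyP Γ (.seq s₁ s₂) τ τ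
  | choice {s₁ s₂ τ τ'} : StTyP Γ s₁ τ τ' → StTyP Γ s₂ τ τ' →
      StTyP Γ (.choice s₁ s₂) τ τ'
  | congC {c σ} : Γ.conTy c = some σ → StTyP Γ (.congC c) (.sort σ) (.sort σ)
  | congF {f ss σs σ₀} : Γ.fnTy f = some (σs, σ₀) → ss.length = σs.length →
      (∀ i (h₁ : i < ss.length) (h₂ : i < σs.length),
        StTyP Γ (ss.get ⟨i, h₁⟩) (.sort (σs.get ⟨i, h₂⟩)) (.sort (σs.get ⟨i, h₂⟩))) →
      StTyP Γ (.congF f ss) (.sort σ₀) (.sort σ₀)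

/-- Typing of the many-sorted, possibly type-changing calculus S'_tc. -/
inductive StTyC (Γ : Ctx) : St → TmTy → TmTy → Prop where
  | rule {tl tr τ τ'} : HasTy Γ tl τ → HasTy Γ tr τ' → StTyC Γ (.rule tl tr) τ τ'
  | id {τ} : WfTy Γ τ → StTyC Γ .id τ τ
  | fail {τ} : WfTy Γ τ → StTyC Γ .fail τ τ
  | neg {s τ τ'} : StTyC Γ s τ τ' → StTyC Γ (.neg s) τ τ
  | seq {s₁ s₂ τ τs τ'} : StTyC Γ s₁ τ τs → StTyC Γ s₂ τs τ' →
      StTyC Γ (.seq s₁ s₂) τ τ'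
  | choice {s₁ s₂ τ τ'} : StTyC Γ s₁ τ τ' → StTyC Γ s₂ τ τ' →
      StTyC Γ (.choice s₁ s₂) τ τ'
  | congC {c σ} : Γ.conTy c = some σ → StTyC Γ (.congC c) (.sort σ) (.sort σ)
  | congF {f ss σs σ₀} : Γ.fnTy f = some (σs, σ₀) → ss.length = σs.length →
      (∀ i (h₁ : i < ss.length) (h₂ : i < σs.length),
        StTyC Γ (ss.get ⟨i, h₁⟩) (.sort (σs.get ⟨i, h₂⟩)) (.sort (σs.get ⟨i, h₂⟩))) →
      StTyC Γ (.congF f ss) (.sort σ₀) (.sort σ₀)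

/-- Typing of the calculus S'_TP with the generic type TP
(no implicit restriction). -/
inductive StTyG (Γ : Ctx) : St → Pit → Prop where
  | rule {tl tr τ} : HasTy Γ tl τ → HasTy Γ tr τ → StTyG Γ (.rule tl tr) (.ms τ τ)
  | id : StTyG Γ .id .tp
  | fail : StTyG Γ .fail .tp
  | negMs {s τ} : StTyG Γ s (.ms τ τ) → StTyG Γ (.neg s) (.ms τ τ)
  | negTp {s} : StTyG Γ s .tp → StTyG Γ (.neg s) .tp
  | seqMs {s₁ s₂ τ} : StTyG Γ s₁ (.ms τ τ) → StTyG Γ s₂ (.ms τ τ) →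
      StTyG Γ (.seq s₁ s₂) (.ms τ τ)
  | seqTp {s₁ s₂} : StTyG Γ s₁ .tp → StTyG Γ s₂ .tp → StTyG Γ (.seq s₁ s₂) .tp
  | choice {s₁ s₂ π} : StTyG Γ s₁ π → StTyG Γ s₂ π → StTyG Γ (.choice s₁ s₂) π
  | congC {c σ} : Γ.conTy c = some σ →
      StTyG Γ (.congC c) (.ms (.sort σ) (.sort σ))
  | congF {f ss σs σ₀} : Γ.fnTy f = some (σs, σ₀) → ss.length = σs.length →
      (∀ i (h₁ : i < ss.length) (h₂ : i < σs.length),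
        StTyG Γ (ss.get ⟨i, h₁⟩) (.ms (.sort (σs.get ⟨i, h₂⟩)) (.sort (σs.get ⟨i, h₂⟩)))) →
      StTyG Γ (.congF f ss) (.ms (.sort σ₀) (.sort σ₀))
  | all {s} : StTyG Γ s .tp → StTyG Γ (.all s) .tp
  | one {s} : StTyG Γ s .tp → StTyG Γ (.one s) .tp
  | ext {s π π'} : StTyG Γ s π' → LessTP Γ π' π → StTyG Γ (.ext s π) π
  | restr {s π π'} : StTyG Γ s π' → LessTP Γ π π' → StTyG Γ (.restr s π) π

/-- Big-step reduction of strategy applications: `Red Γ s t r` means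
`s @ t ⇝ r`, where `r = some t'` is a proper term reduct and `r = none`
is failure `↑`. -/
inductive Red (Γ : Ctx) : St → Tm → Option Tm → Prop where
  | rulePos {tl tr t t'} {θ : String → Tm} :
      applySubst θ tl = t → applySubst θ tr = t' →
      Red Γ (.rule tl tr) t (some t')
  | ruleNeg {tl tr t} : (∀ θ : String → Tm, applySubst θ tl ≠ t) →
      Red Γ (.rule tl tr) t none
  | idPos {t} : Red Γ .id t (some t)
  | failNeg {t} : Red Γ .fail t none
  | negPos {s t} : Red Γ s t none → Red Γ (.neg s) t (some t)
  | negNeg {s t t'} : Red Γ s t (some t') → Red Γ (.neg s) t none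
  | seqPos {s₁ s₂ t t₁ t'} : Red Γ s₁ t (some t₁) → Red Γ s₂ t₁ (some t') →
      Red Γ (.seq s₁ s₂) t (some t')
  | seqNeg₁ {s₁ s₂ t} : Red Γ s₁ t none → Red Γ (.seq s₁ s₂) t none
  | seqNeg₂ {s₁ s₂ t t₁} : Red Γ s₁ t (some t₁) → Red Γ s₂ t₁ none →
      Red Γ (.seq s₁ s₂) t none
  | choicePos₁ {s₁ s₂ t t'} : Red Γ s₁ t (some t') →
      Red Γ (.choice s₁ s₂) t (some t')
  | choicePos₂ {s₁ s₂ t t'} : Red Γ s₂ t (some t') →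
      Red Γ (.choice s₁ s₂) t (some t')
  | choiceNeg {s₁ s₂ t} : Red Γ s₁ t none → Red Γ s₂ t none →
      Red Γ (.choice s₁ s₂) t none
  | congCPos {c} : Red Γ (.congC c) (.con c) (some (.con c))
  | congCNeg {c t} : t ≠ .con c → Red Γ (.congC c) t none
  | congFPos {f ss ts ts'} : ts ≠ [] → ss.length = ts.length →
      ts.length = ts'.length →
      (∀ i (h₀ : i < ss.length) (h₁ : i < ts.length) (h₂ : i < ts'.length),
        Red Γ (ss.get ⟨i, h₀⟩) (ts.get ⟨i, h₁⟩) (some (ts'.get ⟨i, h₂⟩))) →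
      Red Γ (.congF f ss) (.fn f ts) (some (.fn f ts'))
  | congFNegHead {f ss t} : (∀ ts, t ≠ .fn f ts) → Red Γ (.congF f ss) t none
  | congFNegChild {f ss ts i} (h₀ : i < ss.length) (h₁ : i < ts.length) :
      ts ≠ [] → ss.length = ts.length →
      Red Γ (ss.get ⟨i, h₀⟩) (ts.get ⟨i, h₁⟩) none →
      Red Γ (.congF f ss) (.fn f ts) none
  | allCon {s c} : Red Γ (.all s) (.con c) (some (.con c))
  | allPos {s f ts ts'} : ts ≠ [] → ts.length = ts'.length →
      (∀ i (h₁ : i < ts.length) (h₂ : i < ts'.length),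
        Red Γ s (ts.get ⟨i, h₁⟩) (some (ts'.get ⟨i, h₂⟩))) →
      Red Γ (.all s) (.fn f ts) (some (.fn f ts'))
  | allNeg {s f ts i} (h : i < ts.length) : ts ≠ [] →
      Red Γ s (ts.get ⟨i, h⟩) none → Red Γ (.all s) (.fn f ts) none
  | oneCon {s c} : Red Γ (.one s) (.con c) none
  | onePos {s f ts t' i} (h : i < ts.length) :
      Red Γ s (ts.get ⟨i, h⟩) (some t') →
      Red Γ (.one s) (.fn f ts) (some (.fn f (ts.set i t')))
  | oneNeg {s f ts} : ts ≠ [] →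
      (∀ i (h : i < ts.length), Red Γ s (ts.get ⟨i, h⟩) none) →
      Red Γ (.one s) (.fn f ts) none
  | voidPos {t} : Red Γ .voidS t (some .unit)
  | spawnPos {s₁ s₂ t t₁ t₂} : Red Γ s₁ t (some t₁) → Red Γ s₂ t (some t₂) →
      Red Γ (.spawn s₁ s₂) t (some (.pair t₁ t₂))
  | spawnNeg₁ {s₁ s₂ t} : Red Γ s₁ t none → Red Γ (.spawn s₁ s₂) t none
  | spawnNeg₂ {s₁ s₂ t} : Red Γ s₂ t none → Red Γ (.spawn s₁ s₂) t none
  | extApp {s π π' t τ r} : StTyG Γ s π' → HasTy Γ t τ →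
      (∃ τ', LessEqTP Γ (.ms τ τ') π') → Red Γ s t r → Red Γ (.ext s π) t r
  | extNeg {s π π' t τ} : StTyG Γ s π' → HasTy Γ t τ →
      (¬ ∃ τ', LessEqTP Γ (.ms τ τ') π') → Red Γ (.ext s π) t none
  | restrApp {s π t r} : Red Γ s t r → Red Γ (.restr s π) t r

/-- Typing of the full calculus S'_γ (type-preserving and type-unifying
generic types, type-changing many-sorted strategies, tuples). -/
inductive StTyU (Γ : Ctx) : St → Pit → Prop where
  | rule {tl tr τ τ'} : HasTy Γ tl τ → HasTy Γ tr τ' →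
      StTyU Γ (.rule tl tr) (.ms τ τ')
  | id : StTyU Γ .id .tp
  | fail : StTyU Γ .fail .tp
  | negMs {s τ τ'} : StTyU Γ s (.ms τ τ') → StTyU Γ (.neg s) (.ms τ τ)
  | negGen {s π} : StTyU Γ s π → GenericP π → StTyU Γ (.neg s) .tp
  | seqMs {s₁ s₂ τ τs τ'} : StTyU Γ s₁ (.ms τ τs) → StTyU Γ s₂ (.ms τs τ') →
      StTyU Γ (.seq s₁ s₂) (.ms τ τ')
  | seqTpG {s₁ s₂ π} : StTyU Γ s₁ .tp → StTyU Γ s₂ π → GenericP π →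
      StTyU Γ (.seq s₁ s₂) π
  | seqTuMs {s₁ s₂ τ τ'} : StTyU Γ s₁ (.tu τ) → StTyU Γ s₂ (.ms τ τ') →
      StTyU Γ (.seq s₁ s₂) (.tu τ')
  | choice {s₁ s₂ π} : StTyU Γ s₁ π → StTyU Γ s₂ π → StTyU Γ (.choice s₁ s₂) π
  | congC {c σ} : Γ.conTy c = some σ →
      StTyU Γ (.congC c) (.ms (.sort σ) (.sort σ))
  | congF {f ss σs σ₀} : Γ.fnTy f = some (σs, σ₀) → ss.length = σs.length →
      (∀ i (h₁ : i < ss.length) (h₂ : i < σs.length),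
        StTyU Γ (ss.get ⟨i, h₁⟩) (.ms (.sort (σs.get ⟨i, h₂⟩)) (.sort (σs.get ⟨i, h₂⟩)))) →
      StTyU Γ (.congF f ss) (.ms (.sort σ₀) (.sort σ₀))
  | all {s} : StTyU Γ s .tp → StTyU Γ (.all s) .tp
  | one {s} : StTyU Γ s .tp → StTyU Γ (.one s) .tp
  | red {splus s τ} : StTyU Γ splus (.ms (.pair τ τ) τ) → StTyU Γ s (.tu τ) →
      StTyU Γ (.reduceC splus s) (.tu τ)
  | select {s τ} : StTyU Γ s (.tu τ) → StTyU Γ (.select s) (.tu τ)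
  | voidS : StTyU Γ .voidS (.tu .unit)
  | spawn {s₁ s₂ τ₁ τ₂} : StTyU Γ s₁ (.tu τ₁) → StTyU Γ s₂ (.tu τ₂) →
      StTyU Γ (.spawn s₁ s₂) (.tu (.pair τ₁ τ₂))
  | ext {s π π'} : StTyU Γ s π' → LessU Γ π' π → StTyU Γ (.ext s π) π
  | restr {s π π'} : StTyU Γ s π' → LessU Γ π π' → StTyU Γ (.restr s π) π

/-- Left-biased choice `s₁ ←+ s₂`, desugared as `s₁ + (¬s₁ ; s₂)`. -/
def lchoice (s₁ s₂ : St) : St := .choice s₁ (.seq (.neg s₁) s₂)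

end Sg

namespace Sg

/-- Type-tagged terms: every node carries a type tag. -/
inductive TTm where
  | con : String → TmTy → TTm
  | fn : String → List TTm → TmTy → TTm

/-- The top-level type tag of a tagged term. -/
def tagOf : TTm → TmTy
  | .con _ τ => τ
  | .fn _ _ τ => τ

/-- Erase all type tags. -/
def eraseT : TTm → Tm
  | .con c _ => .con c
  | .fn f ts _ => .fn f (ts.attach.map (fun ⟨t, h⟩ => eraseT t))
decreasing_by
  all_goals simp_wf
  all_goals (have := List.sizeOf_lt_of_mem h; omega)

/-- The tags of a tagged term agree with the typing judgement. -/
inductive TaggedOk (Γ : Ctx) : TTm → Prop where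
  | con {c σ} : Γ.conTy c = some σ → TaggedOk Γ (.con c (.sort σ))
  | fn {f ts σs σ₀} : Γ.fnTy f = some (σs, σ₀) → ts ≠ [] →
      ts.length = σs.length →
      (∀ i (h₁ : i < ts.length) (h₂ : i < σs.length),
        tagOf (ts.get ⟨i, h₁⟩) = .sort (σs.get ⟨i, h₂⟩)) →
      (∀ i (h₁ : i < ts.length), TaggedOk Γ (ts.get ⟨i, h₁⟩)) →
      TaggedOk Γ (.fn f ts (.sort σ₀))

/-- Reduction semantics on elaborated strategies and tagged terms;
the extension rule merely compares the tag of the term with the domain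
of the strategy's type annotation. -/
inductive Red2 : St → TTm → Option TTm → Prop where
  | idPos {t} : Red2 .id t (some t)
  | failNeg {t} : Red2 .fail t none
  | negPos {s t} : Red2 s t none → Red2 (.neg s) t (some t)
  | negNeg {s t t'} : Red2 s t (some t') → Red2 (.neg s) t none
  | seqPos {s₁ s₂ t t₁ t'} : Red2 s₁ t (some t₁) → Red2 s₂ t₁ (some t') →
      Red2 (.seq s₁ s₂) t (some t')
  | seqNeg₁ {s₁ s₂ t} : Red2 s₁ t none → Red2 (.seq s₁ s₂) t none
  | seqNeg₂ {s₁ s₂ t t₁} : Red2 s₁ t (some t₁) → Red2 s₂ t₁ none →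
      Red2 (.seq s₁ s₂) t none
  | choicePos₁ {s₁ s₂ t t'} : Red2 s₁ t (some t') →
      Red2 (.choice s₁ s₂) t (some t')
  | choicePos₂ {s₁ s₂ t t'} : Red2 s₂ t (some t') →
      Red2 (.choice s₁ s₂) t (some t')
  | choiceNeg {s₁ s₂ t} : Red2 s₁ t none → Red2 s₂ t none →
      Red2 (.choice s₁ s₂) t none
  | congCPos {c τ} : Red2 (.congC c) (.con c τ) (some (.con c τ))
  | congCNeg {c t} : (∀ τ, t ≠ .con c τ) → Red2 (.congC c) t none
  | congFPos {f ss ts ts' τ} : ts ≠ [] → ss.length = ts.length →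
      ts.length = ts'.length →
      (∀ i (h₀ : i < ss.length) (h₁ : i < ts.length) (h₂ : i < ts'.length),
        Red2 (ss.get ⟨i, h₀⟩) (ts.get ⟨i, h₁⟩) (some (ts'.get ⟨i, h₂⟩))) →
      Red2 (.congF f ss) (.fn f ts τ) (some (.fn f ts' τ))
  | congFNegHead {f ss t} : (∀ ts τ, t ≠ .fn f ts τ) →
      Red2 (.congF f ss) t none
  | congFNegChild {f ss ts τ i} (h₀ : i < ss.length) (h₁ : i < ts.length) :
      ts ≠ [] → ss.length = ts.length →
      Red2 (ss.get ⟨i, h₀⟩) (ts.get ⟨i, h₁⟩) none →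
      Red2 (.congF f ss) (.fn f ts τ) none
  | allCon {s c τ} : Red2 (.all s) (.con c τ) (some (.con c τ))
  | allPos {s f ts ts' τ} : ts ≠ [] → ts.length = ts'.length →
      (∀ i (h₁ : i < ts.length) (h₂ : i < ts'.length),
        Red2 s (ts.get ⟨i, h₁⟩) (some (ts'.get ⟨i, h₂⟩))) →
      Red2 (.all s) (.fn f ts τ) (some (.fn f ts' τ))
  | allNeg {s f ts τ i} (h : i < ts.length) : ts ≠ [] →
      Red2 s (ts.get ⟨i, h⟩) none → Red2 (.all s) (.fn f ts τ) none
  | oneCon {s c τ} : Red2 (.one s) (.con c τ) none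
  | onePos {s f ts τ t' i} (h : i < ts.length) :
      Red2 s (ts.get ⟨i, h⟩) (some t') →
      Red2 (.one s) (.fn f ts τ) (some (.fn f (ts.set i t') τ))
  | oneNeg {s f ts τ} : ts ≠ [] →
      (∀ i (h : i < ts.length), Red2 s (ts.get ⟨i, h⟩) none) →
      Red2 (.one s) (.fn f ts τ) none
  | extPos {s τ τ' π t r} : tagOf t = τ → Red2 s t r →
      Red2 (.ext (.ann s (.ms τ τ')) π) t r
  | extNeg {s τ τ' π t} : tagOf t ≠ τ →
      Red2 (.ext (.ann s (.ms τ τ')) π) t none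

/-- Static elaboration: identity on the basic combinators, annotating
each extension `s ◁ π` with the statically inferred type of `s`. -/
inductive Elab (Γ : Ctx) : St → St → Prop where
  | id : Elab Γ .id .id
  | fail : Elab Γ .fail .fail
  | neg {s s'} : Elab Γ s s' → Elab Γ (.neg s) (.neg s')
  | seq {s₁ s₂ s₁' s₂'} : Elab Γ s₁ s₁' → Elab Γ s₂ s₂' →
      Elab Γ (.seq s₁ s₂) (.seq s₁' s₂')
  | choice {s₁ s₂ s₁' s₂'} : Elab Γ s₁ s₁' → Elab Γ s₂ s₂' →
      Elab Γ (.choice s₁ s₂) (.choice s₁' s₂')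
  | congC {c} : Elab Γ (.congC c) (.congC c)
  | congF {f ss ss'} : ss.length = ss'.length →
      (∀ i (h₁ : i < ss.length) (h₂ : i < ss'.length),
        Elab Γ (ss.get ⟨i, h₁⟩) (ss'.get ⟨i, h₂⟩)) →
      Elab Γ (.congF f ss) (.congF f ss')
  | all {s s'} : Elab Γ s s' → Elab Γ (.all s) (.all s')
  | one {s s'} : Elab Γ s s' → Elab Γ (.one s) (.one s')
  | ext {s s' π π'} : StTyG Γ s π' → Elab Γ s s' →
      Elab Γ (.ext s π) (.ext (.ann s' π') π)

@[simp] lemma eraseT_con (c : String) (τ : TmTy) : eraseT (.con c τ) = .con c := by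
  rw [eraseT]

@[simp] lemma eraseT_fn (f : String) (ts : List TTm) (τ : TmTy) :
    eraseT (.fn f ts τ) = .fn f (ts.map eraseT) := by
  rw [eraseT]
  simp

lemma hasTy_unique {Γ : Ctx} {t : Tm} {τ₁ τ₂ : TmTy}
    (h₁ : HasTy Γ t τ₁) (h₂ : HasTy Γ t τ₂) : τ₁ = τ₂ := by
  induction h₁ generalizing τ₂ with
  | con h => cases h₂ with | con h' => rw [h] at h'; injection h' with h''; rw [h'']
  | fn h _ _ _ => cases h₂ with | fn h' _ _ _ =>
      rw [h] at h'; injection h' with h''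
      injection h'' with ha hb; rw [hb]
  | var h => cases h₂ with | var h' => rw [h] at h'; injection h'
  | unit => cases h₂; rfl
  | pair _ _ ih₁ ih₂ => cases h₂ with | pair a b => rw [ih₁ a, ih₂ b]

lemma taggedOk_hasTy {Γ : Ctx} {tt : TTm} (h : TaggedOk Γ tt) :
    HasTy Γ (eraseT tt) (tagOf tt) := by
  induction h with
  | con h => simpa [tagOf] using HasTy.con h
  | fn h hne hlen htags _ ih =>
      simp only [eraseT_fn, tagOf]
      refine HasTy.fn h (by simpa using hne) (by simpa using hlen) ?_
      intro i h₁ h₂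
      simp only [List.get_eq_getElem, List.getElem_map] at *
      have := ih i (by simpa using h₁)
      rwa [htags i (by simpa using h₁) h₂] at this

lemma stTyG_unique {Γ : Ctx} {s : St} {π₁ π₂ : Pit}
    (h₁ : StTyG Γ s π₁) (h₂ : StTyG Γ s π₂) : π₁ = π₂ := by
  induction h₁ generalizing π₂ with
  | rule ha hb => cases h₂ with | rule ha' hb' => rw [hasTy_unique ha ha']
  | id => cases h₂; rfl
  | fail => cases h₂; rfl
  | negMs h ih => cases h₂ with
      | negMs h' => exact ih h'
      | negTp h' => exact ih h'
  | negTp h ih => cases h₂ with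
      | negMs h' => exact ih h'
      | negTp h' => rfl
  | seqMs ha hb iha ihb => cases h₂ with
      | seqMs ha' _ => exact iha ha'
      | seqTp ha' _ => exact iha ha'
  | seqTp ha hb iha ihb => cases h₂ with
      | seqMs ha' _ => exact iha ha'
      | seqTp => rfl
  | choice ha hb iha ihb => cases h₂ with | choice ha' _ => exact iha ha'
  | congC h => cases h₂ with | congC h' =>
      rw [h] at h'; injection h' with h''; rw [h'']
  | congF h _ _ _ => cases h₂ with | congF h' _ _ =>
      rw [h] at h'; injection h' with h''
      injection h'' with ha hb; rw [hb]
  | all _ _ => cases h₂; rfl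
  | one _ _ => cases h₂; rfl
  | ext _ _ _ => cases h₂; rfl
  | restr _ _ _ => cases h₂; rfl

lemma red2_tag {s : St} {tt : TTm} {r : Option TTm} (h : Red2 s tt r) :
    ∀ tt', r = some tt' → tagOf tt' = tagOf tt := by
  induction h <;> intro tt' hr <;> (try cases hr) <;> try rfl
  case seqPos ih₁ ih₂ => exact (ih₂ _ rfl).trans (ih₁ _ rfl)
  case choicePos₁ ih => exact ih _ rfl
  case choicePos₂ ih => exact ih _ rfl
  case extPos ih => exact ih _ rfl

lemma red2_taggedOk {Γ : Ctx} {s : St} {tt : TTm} {r : Option TTm} (h : Red2 s tt r) :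
    TaggedOk Γ tt → ∀ tt', r = some tt' → TaggedOk Γ tt' := by
  induction h <;> intro ht tt' hr <;> (try cases hr) <;> try exact ht
  case seqPos ih₁ ih₂ => exact ih₂ (ih₁ ht _ rfl) _ rfl
  case choicePos₁ ih => exact ih ht _ rfl
  case choicePos₂ ih => exact ih ht _ rfl
  case extPos ih => exact ih ht _ rfl
  case congFPos f ss ts ts' τ hne hl₁ hl₂ hred ih =>
    cases ht with
    | fn hf hne' hl₃ htags hok =>
      refine TaggedOk.fn hf ?_ (hl₂ ▸ hl₃) ?_ ?_
      · intro h0; apply hne'; rw [← List.length_eq_zero_iff]; rw [h0] at hl₂; simpa using hl₂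
      · intro i h₁ h₂
        rw [red2_tag (hred i (by omega) (by omega) h₁) _ rfl]
        exact htags i (by omega) h₂
      · intro i h₁
        exact ih i (by omega) (by omega) h₁ (hok i (by omega)) _ rfl
  case allPos s f ts ts' τ hne hl hred ih =>
    cases ht with
    | fn hf hne' hl₃ htags hok =>
      refine TaggedOk.fn hf ?_ (hl ▸ hl₃) ?_ ?_
      · intro h0; apply hne'; rw [← List.length_eq_zero_iff]; rw [h0] at hl; simpa using hl
      · intro i h₁ h₂
        rw [red2_tag (hred i (by omega) h₁) _ rfl]
        exact htags i (by omega) h₂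
      · intro i h₁
        exact ih i (by omega) h₁ (hok i (by omega)) _ rfl
  case onePos s f ts τ t' i hi hred ih =>
    cases ht with
    | fn hf hne' hl₃ htags hok =>
      refine TaggedOk.fn hf ?_ (by simpa using hl₃) ?_ ?_
      · simpa using hne'
      · intro j h₁ h₂
        simp only [List.get_eq_getElem, List.getElem_set]
        by_cases hij : i = j
        · subst hij
          rw [if_pos rfl, red2_tag hred _ rfl]
          exact htags _ hi h₂
        · rw [if_neg hij]
          exact htags j (by simpa using h₁) h₂
      · intro j h₁
        simp only [List.get_eq_getElem, List.getElem_set]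
        by_cases hij : i = j
        · subst hij
          rw [if_pos rfl]
          exact ih (hok i hi) _ rfl
        · rw [if_neg hij]
          exact hok j (by simpa using h₁)

lemma elab_main {Γ : Ctx} {s s' : St} (hel : Elab Γ s s') :
    ∀ {π : Pit}, StTyG Γ s π → ∀ {tt : TTm}, TaggedOk Γ tt →
    ((∀ tt', Red2 s' tt (some tt') → Red Γ s (eraseT tt) (some (eraseT tt'))) ∧
     (Red2 s' tt none → Red Γ s (eraseT tt) none) ∧
     (∀ t', Red Γ s (eraseT tt) (some t') → ∃ tt', eraseT tt' = t' ∧ Red2 s' tt (some tt')) ∧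
     (Red Γ s (eraseT tt) none → Red2 s' tt none)) := by
  induction hel with
  | id =>
    intro π hty tt htt
    refine ⟨?_, ?_, ?_, ?_⟩
    · intro tt' h; cases h; exact Red.idPos
    · intro h; cases h
    · intro t' h; cases h; exact ⟨tt, rfl, Red2.idPos⟩
    · intro h; cases h
  | fail =>
    intro π hty tt htt
    refine ⟨?_, ?_, ?_, ?_⟩
    · intro tt' h; cases h
    · intro _; exact Red.failNeg
    · intro t' h; cases h
    · intro _; exact Red2.failNeg
  | neg hel ih =>
    intro π hty tt htt
    obtain ⟨π₀, hs⟩ : ∃ π₀, StTyG Γ _ π₀ := by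
      cases hty with
      | negMs h => exact ⟨_, h⟩
      | negTp h => exact ⟨_, h⟩
    have IH := ih hs htt
    refine ⟨?_, ?_, ?_, ?_⟩
    · intro tt' h
      cases h with | negPos h2 => exact Red.negPos (IH.2.1 h2)
    · intro h
      cases h with | negNeg h2 => exact Red.negNeg (IH.1 _ h2)
    · intro t' h
      cases h with | negPos h2 => exact ⟨tt, rfl, Red2.negPos (IH.2.2.2 h2)⟩
    · intro h
      cases h with | negNeg h2 =>
        obtain ⟨tt₁, _, hr⟩ := IH.2.2.1 _ h2
        exact Red2.negNeg hr
  | seq hel₁ hel₂ ih₁ ih₂ =>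
    intro π hty tt htt
    obtain ⟨π₀, hs₁, hs₂⟩ : ∃ π₀, StTyG Γ _ π₀ ∧ StTyG Γ _ π₀ := by
      cases hty with
      | seqMs h₁ h₂ => exact ⟨_, h₁, h₂⟩
      | seqTp h₁ h₂ => exact ⟨_, h₁, h₂⟩
    refine ⟨?_, ?_, ?_, ?_⟩
    · intro tt' h
      cases h with | seqPos ha hb =>
        have htt₁ := red2_taggedOk (Γ := Γ) ha htt _ rfl
        exact Red.seqPos ((ih₁ hs₁ htt).1 _ ha) ((ih₂ hs₂ htt₁).1 _ hb)
    · intro h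
      cases h with
      | seqNeg₁ ha => exact Red.seqNeg₁ ((ih₁ hs₁ htt).2.1 ha)
      | seqNeg₂ ha hb =>
        have htt₁ := red2_taggedOk (Γ := Γ) ha htt _ rfl
        exact Red.seqNeg₂ ((ih₁ hs₁ htt).1 _ ha) ((ih₂ hs₂ htt₁).2.1 hb)
    · intro t' h
      cases h with | seqPos ha hb =>
        obtain ⟨tt₁, he, hr₁⟩ := (ih₁ hs₁ htt).2.2.1 _ ha
        have htt₁ := red2_taggedOk (Γ := Γ) hr₁ htt _ rfl
        obtain ⟨tt₂, he₂, hr₂⟩ := (ih₂ hs₂ htt₁).2.2.1 _ (he ▸ hb)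
        exact ⟨tt₂, he₂, Red2.seqPos hr₁ hr₂⟩
    · intro h
      cases h with
      | seqNeg₁ ha => exact Red2.seqNeg₁ ((ih₁ hs₁ htt).2.2.2 ha)
      | seqNeg₂ ha hb =>
        obtain ⟨tt₁, he, hr₁⟩ := (ih₁ hs₁ htt).2.2.1 _ ha
        have htt₁ := red2_taggedOk (Γ := Γ) hr₁ htt _ rfl
        exact Red2.seqNeg₂ hr₁ ((ih₂ hs₂ htt₁).2.2.2 (he ▸ hb))
  | choice hel₁ hel₂ ih₁ ih₂ =>
    intro π hty tt htt
    obtain ⟨hs₁, hs₂⟩ : StTyG Γ _ π ∧ StTyG Γ _ π := by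
      cases hty with | choice h₁ h₂ => exact ⟨h₁, h₂⟩
    refine ⟨?_, ?_, ?_, ?_⟩
    · intro tt' h
      cases h with
      | choicePos₁ ha => exact Red.choicePos₁ ((ih₁ hs₁ htt).1 _ ha)
      | choicePos₂ ha => exact Red.choicePos₂ ((ih₂ hs₂ htt).1 _ ha)
    · intro h
      cases h with
      | choiceNeg ha hb => exact Red.choiceNeg ((ih₁ hs₁ htt).2.1 ha) ((ih₂ hs₂ htt).2.1 hb)
    · intro t' h
      cases h with
      | choicePos₁ ha =>
        obtain ⟨tt₁, he, hr⟩ := (ih₁ hs₁ htt).2.2.1 _ ha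
        exact ⟨tt₁, he, Red2.choicePos₁ hr⟩
      | choicePos₂ ha =>
        obtain ⟨tt₁, he, hr⟩ := (ih₂ hs₂ htt).2.2.1 _ ha
        exact ⟨tt₁, he, Red2.choicePos₂ hr⟩
    · intro h
      cases h with
      | choiceNeg ha hb => exact Red2.choiceNeg ((ih₁ hs₁ htt).2.2.2 ha) ((ih₂ hs₂ htt).2.2.2 hb)
  | congC =>
    intro π hty tt htt
    refine ⟨?_, ?_, ?_, ?_⟩
    · intro tt' h
      cases h with | congCPos => simpa using Red.congCPos
    · intro h
      cases h with | congCNeg hne =>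
        apply Red.congCNeg
        cases tt with
        | con c' τ =>
          simp only [eraseT_con]
          intro heq; injection heq with heq'; subst heq'
          exact hne _ rfl
        | fn f ts τ => simp
    · intro t' h
      generalize hE : eraseT tt = u at h
      cases h with | congCPos =>
        cases tt with
        | fn f ts τ => rw [eraseT_fn] at hE; cases hE
        | con c' τ =>
          rw [eraseT_con] at hE
          injection hE with h'
          subst h'
          exact ⟨.con c' τ, by simp, Red2.congCPos⟩
    · intro h
      generalize hE : eraseT tt = u at h
      cases h with | congCNeg hne =>
        apply Red2.congCNeg
        intro τ heq
        subst heq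
        rw [eraseT_con] at hE
        exact hne hE.symm
  | @congF f ss ss' hlen hall ih =>
    intro π hty tt htt
    cases hty with | congF hf hlen₂ htys =>
    refine ⟨?_, ?_, ?_, ?_⟩
    · intro tt' h
      cases h with | congFPos hne hl₁ hl₂ hred =>
      rename_i ts ts' τ
      cases htt with | fn hf' hne' hl₃ htags hok =>
      rw [eraseT_fn, eraseT_fn]
      have hl₁' : ss'.length = ts.length := hl₁
      refine Red.congFPos (by simpa using hne) (by simp; omega) (by simpa using hl₂) ?_
      intro i h₀ h₁ h₂
      have hi : i < ts.length := by simpa using h₁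
      have := (ih i h₀ (by omega) (htys i h₀ (by omega)) (hok i hi)).1 _
        (hred i (by omega) hi (by omega))
      simpa using this
    · intro h
      cases h with
      | congFNegHead hne =>
        apply Red.congFNegHead
        intro ts heq
        cases tt with
        | con c τ => rw [eraseT_con] at heq; cases heq
        | fn f₁ ts₁ τ =>
          rw [eraseT_fn] at heq
          injection heq with h1 h2
          subst h1
          exact hne ts₁ τ rfl
      | congFNegChild h₀ h₁ hne hl hred =>
        rename_i ts τ i
        cases htt with | fn hf' hne' hl₃ htags hok =>
        rw [eraseT_fn]
        have hl' : ss'.length = ts.length := hl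
        have hi : i < ts.length := h₁
        refine Red.congFNegChild (i := i) (by omega) (by simpa using h₁) (by simpa using hne)
          (by simp; omega) ?_
        have := (ih i (by omega) h₀ (htys i (by omega) (by omega)) (hok i hi)).2.1 hred
        simpa using this
    · intro t' h
      generalize hE : eraseT tt = u at h
      cases h with | congFPos hne hl₁ hl₂ hred =>
      rename_i ts₀ ts₀'
      cases tt with
      | con c τ => rw [eraseT_con] at hE; cases hE
      | fn f₁ ts τ =>
        rw [eraseT_fn] at hE
        injection hE with hfe hte
        subst hfe
        subst hte
        cases htt with | @fn _ _ σs₂ σ₀₂ hf' hne' hl₃ htags hok =>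
        have hlen₀ : ss.length = ts.length := by simpa using hl₁
        have hlen₁ : ts.length = ts₀'.length := by simpa using hl₂
        have key : ∀ i : Fin ts.length, ∃ x, eraseT x = ts₀'.get ⟨i.1, by omega⟩ ∧
            Red2 (ss'.get ⟨i.1, by omega⟩) (ts.get i) (some x) := by
          rintro ⟨i, hi⟩
          refine (ih i (by omega) (by omega) (htys i (by omega) (by omega)) (hok i hi)).2.2.1 _ ?_
          have := hred i (by omega) (by simpa using hi) (by omega)
          simpa using this
        choose g hg₁ hg₂ using key
        refine ⟨.fn f₁ (List.ofFn g) (.sort σ₀₂), ?_, ?_⟩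
        · rw [eraseT_fn]
          congr 1
          refine List.ext_getElem (by simp; omega) ?_
          intro i hi₁ hi₂
          have hi : i < ts.length := by simpa using hi₁
          have := hg₁ ⟨i, hi⟩
          simpa using this
        · have hb₁ : ss'.length = ts.length := by omega
          have hb₂ : ts.length = (List.ofFn g).length := by simp
          refine Red2.congFPos (by simpa using hne) hb₁ hb₂ ?_
          intro i h₀ h₁ h₂
          have := hg₂ ⟨i, h₁⟩
          simpa using this
    · intro h
      generalize hE : eraseT tt = u at h
      cases h with
      | congFNegHead hne =>
        apply Red2.congFNegHead
        intro ts τ heq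
        subst heq
        rw [eraseT_fn] at hE
        exact hne _ hE.symm
      | congFNegChild h₀ h₁ hne hl hred =>
        rename_i ts₀ i
        cases tt with
        | con c τ => rw [eraseT_con] at hE; cases hE
        | fn f₁ ts τ =>
          rw [eraseT_fn] at hE
          injection hE with hfe hte
          subst hfe
          subst hte
          cases htt with | fn hf' hne' hl₃ htags hok =>
          have hl' : ss.length = ts.length := by simpa using hl
          have hi : i < ts.length := by simpa using h₁
          refine Red2.congFNegChild (i := i) (by omega) hi (by simpa using hne) (by omega) ?_
          refine (ih i h₀ (by omega) (htys i h₀ (by omega)) (hok i hi)).2.2.2 ?_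
          simpa using hred
  | @all sa sa' hel ih =>
    intro π hty tt htt
    cases hty with | all hs =>
    refine ⟨?_, ?_, ?_, ?_⟩
    · intro tt' h
      cases h with
      | allCon => simpa using Red.allCon
      | allPos hne hl hred =>
        rename_i f ts ts' τ
        cases htt with | fn hf' hne' hl₃ htags hok =>
        rw [eraseT_fn, eraseT_fn]
        refine Red.allPos (by simpa using hne) (by simpa using hl) ?_
        intro i h₁ h₂
        have hi : i < ts.length := by simpa using h₁
        have := (ih hs (hok i hi)).1 _ (hred i hi (by omega))
        simpa using this
    · intro h
      cases h with
      | allNeg hb hne hred =>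
        rename_i f ts τ i
        cases htt with | fn hf' hne' hl₃ htags hok =>
        rw [eraseT_fn]
        refine Red.allNeg (i := i) (by simpa using hb) (by simpa using hne) ?_
        have := (ih hs (hok i hb)).2.1 hred
        simpa using this
    · intro t' h
      generalize hE : eraseT tt = u at h
      cases h with
      | allCon =>
        cases tt with
        | fn f ts τ => rw [eraseT_fn] at hE; cases hE
        | con c' τ =>
          rw [eraseT_con] at hE
          injection hE with h'
          subst h'
          exact ⟨.con c' τ, by simp, Red2.allCon⟩
      | allPos hne hl hred =>
        rename_i f ts₀'
        cases tt with
        | con c τ => rw [eraseT_con] at hE; cases hE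
        | fn f₁ ts τ =>
          rw [eraseT_fn] at hE
          injection hE with hfe hte
          subst hfe
          subst hte
          cases htt with | @fn _ _ σs₂ σ₀₂ hf' hne' hl₃ htags hok =>
          have hlen₁ : ts.length = ts₀'.length := by simpa using hl
          have key : ∀ i : Fin ts.length, ∃ x, eraseT x = ts₀'.get ⟨i.1, by omega⟩ ∧
              Red2 sa' (ts.get i) (some x) := by
            rintro ⟨i, hi⟩
            refine (ih hs (hok i hi)).2.2.1 _ ?_
            have := hred i (by simpa using hi) (by omega)
            simpa using this
          choose g hg₁ hg₂ using key
          refine ⟨.fn f₁ (List.ofFn g) (.sort σ₀₂), ?_, ?_⟩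
          · rw [eraseT_fn]
            congr 1
            refine List.ext_getElem (by simp; omega) ?_
            intro i hi₁ hi₂
            have hi : i < ts.length := by simpa using hi₁
            have := hg₁ ⟨i, hi⟩
            simpa using this
          · refine Red2.allPos (by simpa using hne) (by simp) ?_
            intro i h₁ h₂
            have := hg₂ ⟨i, h₁⟩
            simpa using this
    · intro h
      generalize hE : eraseT tt = u at h
      cases h with
      | allNeg hb hne hred =>
        rename_i f ts₀ i
        cases tt with
        | con c τ => rw [eraseT_con] at hE; cases hE
        | fn f₁ ts τ =>
          rw [eraseT_fn] at hE
          injection hE with hfe hte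
          subst hfe
          subst hte
          cases htt with | fn hf' hne' hl₃ htags hok =>
          have hi : i < ts.length := by simpa using hb
          refine Red2.allNeg (i := i) hi (by simpa using hne) ?_
          refine (ih hs (hok i hi)).2.2.2 ?_
          simpa using hred
  | one hel ih =>
    intro π hty tt htt
    cases hty with | one hs =>
    refine ⟨?_, ?_, ?_, ?_⟩
    · intro tt' h
      cases h with
      | onePos hb hred =>
        rename_i f ts τ t₀ i
        cases htt with | fn hf' hne' hl₃ htags hok =>
        rw [eraseT_fn, eraseT_fn, List.map_set]
        refine Red.onePos (i := i) (by simpa using hb) ?_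
        have := (ih hs (hok i hb)).1 _ hred
        simpa using this
    · intro h
      cases h with
      | oneCon => simpa using Red.oneCon
      | oneNeg hne hred =>
        rename_i f ts τ
        cases htt with | fn hf' hne' hl₃ htags hok =>
        rw [eraseT_fn]
        refine Red.oneNeg (by simpa using hne) ?_
        intro i hb
        have hi : i < ts.length := by simpa using hb
        have := (ih hs (hok i hi)).2.1 (hred i hi)
        simpa using this
    · intro t' h
      generalize hE : eraseT tt = u at h
      cases h with
      | onePos hb hred =>
        rename_i f ts₀ t₀ i
        cases tt with
        | con c τ => rw [eraseT_con] at hE; cases hE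
        | fn f₁ ts τ =>
          rw [eraseT_fn] at hE
          injection hE with hfe hte
          subst hfe
          subst hte
          cases htt with | fn hf' hne' hl₃ htags hok =>
          have hi : i < ts.length := by simpa using hb
          obtain ⟨tt₀, he, hr⟩ := (ih hs (hok i hi)).2.2.1 _ (by simpa using hred)
          refine ⟨.fn f₁ (ts.set i tt₀) _, ?_, Red2.onePos (i := i) hi hr⟩
          rw [eraseT_fn, List.map_set, he]
    · intro h
      generalize hE : eraseT tt = u at h
      cases h with
      | oneCon =>
        cases tt with
        | fn f ts τ => rw [eraseT_fn] at hE; cases hE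
        | con c' τ => exact Red2.oneCon
      | oneNeg hne hred =>
        rename_i f ts₀
        cases tt with
        | con c τ => rw [eraseT_con] at hE; cases hE
        | fn f₁ ts τ =>
          rw [eraseT_fn] at hE
          injection hE with hfe hte
          subst hfe
          subst hte
          cases htt with | fn hf' hne' hl₃ htags hok =>
          refine Red2.oneNeg (by simpa using hne) ?_
          intro i hi
          refine (ih hs (hok i hi)).2.2.2 ?_
          have := hred i (by simpa using hi)
          simpa using this
  | @ext se se' πe πa hty₀ hel ih =>
    intro π₂ hty tt htt
    cases hty with | ext hsub hless =>
    cases hless with | tp hwf =>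
    rename_i τ
    have hπa : πa = Pit.ms τ τ := stTyG_unique hty₀ hsub
    subst hπa
    have IH := ih hsub htt
    refine ⟨?_, ?_, ?_, ?_⟩
    · intro tt' h
      cases h with
      | extPos htg hred =>
        exact Red.extApp hsub (taggedOk_hasTy htt) ⟨τ, Or.inl (by rw [htg])⟩ (IH.1 _ hred)
    · intro h
      cases h with
      | extPos htg hred =>
        exact Red.extApp hsub (taggedOk_hasTy htt) ⟨τ, Or.inl (by rw [htg])⟩ (IH.2.1 hred)
      | extNeg htg =>
        refine Red.extNeg hsub (taggedOk_hasTy htt) ?_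
        rintro ⟨τ', hle⟩
        rcases hle with heq | hlt
        · injection heq with h1 h2
          exact htg h1
        · cases hlt
    · intro t' h
      generalize hE : eraseT tt = u at h
      cases h with
      | extApp hty₁ hty₂ hex hred =>
        have hπ := stTyG_unique hty₁ hsub
        subst hπ
        obtain ⟨τ', hle⟩ := hex
        subst hE
        have htg : tagOf tt = τ := by
          rcases hle with heq | hlt
          · injection heq with h1 h2
            rw [← h1]
            exact hasTy_unique (taggedOk_hasTy htt) hty₂
          · cases hlt
        obtain ⟨tt', he, hr⟩ := IH.2.2.1 _ hred
        exact ⟨tt', he, Red2.extPos htg hr⟩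
    · intro h
      generalize hE : eraseT tt = u at h
      cases h with
      | extApp hty₁ hty₂ hex hred =>
        have hπ := stTyG_unique hty₁ hsub
        subst hπ
        obtain ⟨τ', hle⟩ := hex
        subst hE
        have htg : tagOf tt = τ := by
          rcases hle with heq | hlt
          · injection heq with h1 h2
            rw [← h1]
            exact hasTy_unique (taggedOk_hasTy htt) hty₂
          · cases hlt
        exact Red2.extPos htg (IH.2.2.2 hred)
      | extNeg hty₁ hty₂ hnex =>
        have hπ := stTyG_unique hty₁ hsub
        subst hπ
        subst hE
        refine Red2.extNeg ?_
        intro htg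
        apply hnex
        have h0 := hasTy_unique (taggedOk_hasTy htt) hty₂
        exact ⟨τ, Or.inl (by rw [← h0, htg])⟩


/-- static elaboration preserves the reduction semantics
modulo type tags: for a well-typed strategy `s` with elaboration `s'`,
and a consistently tagged term, `s'` produces a term reduct on the
tagged term iff `s` produces the corresponding (tag-erased) term reduct
under the type-dependent reduction semantics. -/
theorem elaboration_preserves_semantics
    (Γ : Ctx) (s s' : St) (π : Pit) (tt : TTm)
    (hty : StTyG Γ s π) (hel : Elab Γ s s') (htag : TaggedOk Γ tt) :
    (∀ tt', Red2 s' tt (some tt') →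
      Red Γ s (eraseT tt) (some (eraseT tt'))) ∧
    (∀ t', Red Γ s (eraseT tt) (some t') →
      ∃ tt', eraseT tt' = t' ∧ Red2 s' tt (some tt')) := by
  obtain ⟨a, _, c, _⟩ := elab_main hel hty htag
  exact ⟨a, c⟩

end Sg
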